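/- Let A be a subset of ℂ that is countable and dense in ℂ. Then there exists an entire function f : ℂ → ℂ which is not a polynomial such that f^(s)(α) ∈ A for every α ∈ A and every natural number s ≥ 0. -/

import Mathlib

/-!
Enumerate `A = {e₀, e₁, …}` and list the pairs `(i, s)` as nodes `aₙ = eᵢ`, ordered so that
`(i, t)` precedes `(i, s)` for `t < s`; thus `eᵢ` occurs exactly `s` times before the node of
`(i, s)`. Take `f = ∑ cₙ ∏_{k<n} (z - a_k)`. The `s`-th derivative of the `n`-th term does not
vanish at `aₙ`, while every later term vanishes there to order `> s`, so `f^(s)(aₙ)` is a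
finite sum in which `cₙ` enters with a nonzero coefficient. Choosing the `cₙ` one after another,
small enough for locally uniform convergence, puts every `f^(s)(eᵢ)` in the dense set `A \ {0}`;
the nonvanishing of all derivatives at `e₀` rules out a polynomial.
-/

open Polynomial Finset Filter Lagrange
open scoped Nat

theorem Lagrange.rootMultiplicity_nodal {ι R : Type*} [CommRing R] [IsDomain R] [DecidableEq R]
    (s : Finset ι) (v : ι → R) (t : R) :
    (nodal s v).rootMultiplicity t = #{i ∈ s | v i = t} := by
  have : nodal s v = ((s.val.map v).map fun a => X - C a).prod := by
    rw [Multiset.map_map]; rfl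
  rw [← count_roots, this, roots_multiset_prod_X_sub_C, Multiset.count_map]
  simp [Finset.card, Finset.filter_val, eq_comm]

theorem Polynomial.eval_iterate_derivative_rootMultiplicity_ne_zero {R : Type*} [CommRing R]
    [IsDomain R] [CharZero R] {p : R[X]} (hp : p ≠ 0) (t : R) :
    (derivative^[p.rootMultiplicity t] p).eval t ≠ 0 := by
  rw [eval_iterate_derivative_rootMultiplicity, nsmul_eq_mul]
  exact mul_ne_zero (Nat.cast_ne_zero.2 (Nat.factorial_ne_zero _))
    (eval_divByMonic_pow_rootMultiplicity_ne_zero t hp)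

section Nodes

variable {R : Type*} [CommRing R] [IsDomain R] [DecidableEq R] (a : ℕ → R)

theorem eval_iterate_derivative_nodal_range_ne_zero [CharZero R] (n : ℕ) :
    (derivative^[#{k ∈ range n | a k = a n}] (nodal (range n) a)).eval (a n) ≠ 0 := by
  rw [← rootMultiplicity_nodal]
  exact eval_iterate_derivative_rootMultiplicity_ne_zero nodal_ne_zero _

theorem eval_iterate_derivative_nodal_range_eq_zero {n N : ℕ} (h : n < N) :
    (derivative^[#{k ∈ range n | a k = a n}] (nodal (range N) a)).eval (a n) = 0 := by
  refine isRoot_iterate_derivative_of_lt_rootMultiplicity ?_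
  rw [rootMultiplicity_nodal]
  refine card_lt_card ⟨filter_subset_filter _ (range_subset_range.2 h.le), fun hsub => ?_⟩
  simpa using hsub (mem_filter.2 ⟨mem_range.2 h, rfl⟩)

end Nodes

theorem Dense.exists_seq_norm_le_sum_mul_mem {𝕜 : Type*} [NormedField 𝕜] {S : Set 𝕜}
    (hS : Dense S) {d : ℕ → ℕ → 𝕜} (hd : ∀ n, d n n ≠ 0) {w : ℕ → ℝ} (hw : ∀ n, 0 < w n) :
    ∃ c : ℕ → 𝕜, ∀ n, ‖c n‖ ≤ w n ∧ ∑ k ∈ range (n + 1), c k * d n k ∈ S := by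
  have step : ∀ n (g : ℕ → 𝕜), ∃ x, ‖x‖ ≤ w n ∧ ∑ k ∈ range n, g k * d n k + x * d n n ∈ S := by
    intro n g
    obtain ⟨t, ht, hdist⟩ := hS.exists_dist_lt (∑ k ∈ range n, g k * d n k)
      (mul_pos (hw n) (norm_pos_iff.2 (hd n)))
    refine ⟨(t - ∑ k ∈ range n, g k * d n k) / d n n, ?_, ?_⟩
    · rw [norm_div, div_le_iff₀ (norm_pos_iff.2 (hd n)), ← dist_eq_norm, dist_comm]
      exact hdist.le
    · rwa [div_mul_cancel₀ _ (hd n), add_sub_cancel]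
  choose next hnext using step
  let c : ℕ → 𝕜 := Nat.strongRec fun n prev => next n fun k => if h : k < n then prev k h else 0
  have hc : ∀ n, c n = next n fun k => if k < n then c k else 0 := Nat.strongRec_eq _
  refine ⟨c, fun n => ?_⟩
  obtain ⟨hle, hmem⟩ := hnext n fun k => if k < n then c k else 0
  rw [← hc] at hle hmem
  refine ⟨hle, ?_⟩
  convert hmem using 1
  rw [sum_range_succ]
  congr 1
  exact sum_congr rfl fun k hk => by rw [if_pos (mem_range.1 hk)]

theorem TendstoLocallyUniformly.iteratedDeriv {ι : Type*} {l : Filter ι} {F : ι → ℂ → ℂ}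
    {f : ℂ → ℂ} (h : TendstoLocallyUniformly F f l) (hF : ∀ i, Differentiable ℂ (F i)) (s : ℕ) :
    TendstoLocallyUniformly (fun i => iteratedDeriv s (F i)) (iteratedDeriv s f) l := by
  induction s with
  | zero => simpa using h
  | succ s ih =>
    simp only [iteratedDeriv_succ]
    rw [← tendstoLocallyUniformlyOn_univ] at ih ⊢
    exact ih.deriv (Eventually.of_forall fun i =>
      ((hF i).contDiff.differentiable_iteratedDeriv s (WithTop.coe_lt_top _)).differentiableOn)
      isOpen_univ

theorem Polynomial.iteratedDeriv_eval {𝕜 : Type*} [NontriviallyNormedField 𝕜] (p : 𝕜[X])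
    (n : ℕ) : iteratedDeriv n (fun z => p.eval z) = fun z => (derivative^[n] p).eval z := by
  induction n generalizing p with
  | zero => rfl
  | succ n ih =>
    rw [iteratedDeriv_succ', Function.iterate_succ_apply, ← ih]
    congr 1
    ext z
    exact p.deriv

theorem iteratedDeriv_sum_mul_eval {ι : Type*} (s : Finset ι) (c : ι → ℂ) (Q : ι → ℂ[X]) (m : ℕ) :
    iteratedDeriv m (fun z => ∑ i ∈ s, c i * (Q i).eval z)
      = fun z => ∑ i ∈ s, c i * (derivative^[m] (Q i)).eval z := by
  have : (fun z => ∑ i ∈ s, c i * (Q i).eval z) = fun z => (∑ i ∈ s, C (c i) * Q i).eval z := by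
    simp [eval_finsetSum]
  rw [this, iteratedDeriv_eval]
  simp [iterate_derivative_sum, iterate_derivative_C_mul, eval_finsetSum]

theorem Lagrange.norm_eval_nodal_le {ι : Type*} (s : Finset ι) (v : ι → ℂ) {z : ℂ} {R : ℝ}
    (hz : ‖z‖ ≤ R) : ‖(nodal s v).eval z‖ ≤ (1 + R) ^ #s * ∏ i ∈ s, (1 + ‖v i‖) := by
  rw [eval_nodal, norm_prod, ← prod_const, ← prod_mul_distrib]
  refine prod_le_prod (fun _ _ => norm_nonneg _) fun i _ => ?_
  have hR : 0 ≤ R := (norm_nonneg z).trans hz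
  calc ‖z - v i‖ ≤ ‖z‖ + ‖v i‖ := norm_sub_le _ _
    _ ≤ (1 + R) * (1 + ‖v i‖) := by nlinarith [norm_nonneg (v i)]

theorem tendstoLocallyUniformly_sum_range_mul_eval_nodal (a : ℕ → ℂ) {c : ℕ → ℂ}
    (hc : ∀ n, ‖c n‖ * ∏ k ∈ range n, (1 + ‖a k‖) ≤ 1 / n !) :
    TendstoLocallyUniformly (fun N z => ∑ n ∈ range N, c n * (nodal (range n) a).eval z)
      (fun z => ∑' n, c n * (nodal (range n) a).eval z) atTop := by
  rw [tendstoLocallyUniformly_iff_forall_isCompact]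
  intro K hK
  obtain ⟨R, hKR⟩ := hK.isBounded.subset_closedBall 0
  refine (tendstoUniformlyOn_tsum_nat (Real.summable_pow_div_factorial (1 + R))
    fun n z hz => ?_).mono hKR
  have hR : 0 ≤ 1 + R := by
    have := (norm_nonneg z).trans (mem_closedBall_zero_iff.1 hz); linarith
  calc ‖c n * (nodal (range n) a).eval z‖
      ≤ ‖c n‖ * ((1 + R) ^ n * ∏ k ∈ range n, (1 + ‖a k‖)) := by
        rw [norm_mul]
        gcongr
        simpa using norm_eval_nodal_le (range n) a (mem_closedBall_zero_iff.1 hz)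
    _ = (1 + R) ^ n * (‖c n‖ * ∏ k ∈ range n, (1 + ‖a k‖)) := by ring
    _ ≤ (1 + R) ^ n / n ! := by
        rw [div_eq_mul_one_div]
        gcongr
        exact hc n

theorem exists_differentiable_iteratedDeriv_mem_of_dense (a : ℕ → ℂ) {S : Set ℂ}
    (hS : Dense S) : ∃ f : ℂ → ℂ, Differentiable ℂ f ∧
      ∀ n, iteratedDeriv #{k ∈ range n | a k = a n} f (a n) ∈ S := by
  set m : ℕ → ℕ := fun n => #{k ∈ range n | a k = a n}
  obtain ⟨c, hc⟩ := hS.exists_seq_norm_le_sum_mul_mem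
    (d := fun n k => (derivative^[m n] (nodal (range k) a)).eval (a n))
    (eval_iterate_derivative_nodal_range_ne_zero a)
    -- makes the `n`-th term at most `(1 + R) ^ n / n !` on the ball of radius `R`
    (w := fun n => 1 / (n ! * ∏ k ∈ range n, (1 + ‖a k‖))) fun n => by positivity
  set F : ℕ → ℂ → ℂ := fun N z => ∑ n ∈ range N, c n * (nodal (range n) a).eval z
  set f : ℂ → ℂ := fun z => ∑' n, c n * (nodal (range n) a).eval z
  have hlim : TendstoLocallyUniformly F f atTop :=
    tendstoLocallyUniformly_sum_range_mul_eval_nodal a fun n => by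
      rw [← le_div_iff₀ (by positivity), div_div]
      exact (hc n).1
  have hF : ∀ N, Differentiable ℂ (F N) := fun N =>
    Differentiable.fun_sum fun n _ => (Polynomial.differentiable _).const_mul _
  refine ⟨f, ?_, fun n => ?_⟩
  · exact differentiableOn_univ.1 ((tendstoLocallyUniformlyOn_univ.2 hlim).differentiableOn
      (Eventually.of_forall fun N => (hF N).differentiableOn) isOpen_univ)
  have hstable : ∀ N ≥ n + 1, iteratedDeriv (m n) (F N) (a n)
      = ∑ k ∈ range (n + 1), c k * (derivative^[m n] (nodal (range k) a)).eval (a n) := by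
    intro N hN
    rw [iteratedDeriv_sum_mul_eval]
    dsimp only
    rw [← sum_range_add_sum_Ico _ hN, add_eq_left]
    refine sum_eq_zero fun k hk => ?_
    rw [eval_iterate_derivative_nodal_range_eq_zero a (mem_Ico.1 hk).1, mul_zero]
  have hconv := ((tendstoLocallyUniformlyOn_univ.2 (hlim.iteratedDeriv hF (m n))).tendsto_at
    (Set.mem_univ (a n))).congr' (eventually_atTop.2 ⟨n + 1, hstable⟩)
  rw [tendsto_nhds_unique hconv tendsto_const_nhds]
  exact (hc n).2

theorem Nat.card_filter_range_pair_unpair_fst_eq (i s : ℕ) :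
    #{k ∈ range (Nat.pair i s) | (Nat.unpair k).1 = i} = s := by
  have hmono : StrictMono (Nat.pair i) := fun _ _ => Nat.pair_lt_pair_right i
  have : {k ∈ range (Nat.pair i s) | (Nat.unpair k).1 = i}
      = (range s).map ⟨Nat.pair i, hmono.injective⟩ := by
    ext k
    simp only [mem_filter, mem_range, Finset.mem_map, Function.Embedding.coeFn_mk]
    constructor
    · rintro ⟨hk, hki⟩
      rw [← Nat.pair_unpair k, hki, hmono.lt_iff_lt] at hk
      exact ⟨k.unpair.2, hk, hki ▸ Nat.pair_unpair k⟩
    · rintro ⟨t, ht, rfl⟩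
      exact ⟨hmono ht, by simp⟩
  rw [this, card_map, card_range]

theorem stmt_11 (A : Set ℂ) (hA : A.Countable) (hAd : Dense A) :
    ∃ f : ℂ → ℂ, Differentiable ℂ f ∧
      (∀ p : Polynomial ℂ, f ≠ fun z => p.eval z) ∧
      ∀ α ∈ A, ∀ s : ℕ, iteratedDeriv s f α ∈ A := by
  have : Countable A := hA.to_subtype
  have : Infinite A := Set.infinite_coe_iff.2 fun hfin => by
    simpa using (hAd.sdiff_finite hfin).nonempty
  obtain ⟨e⟩ : Nonempty (ℕ ≃ A) := nonempty_equiv_of_countable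
  have he : Function.Injective fun i => (e i : ℂ) := Subtype.val_injective.comp e.injective
  obtain ⟨f, hf, hmem⟩ := exists_differentiable_iteratedDeriv_mem_of_dense
    (fun n => (e (Nat.unpair n).1 : ℂ)) (hAd.sdiff_singleton 0)
  have hvalue : ∀ i s, iteratedDeriv s f (e i) ∈ A \ {0} := fun i s => by
    simpa [he.eq_iff, Nat.card_filter_range_pair_unpair_fst_eq] using hmem (Nat.pair i s)
  refine ⟨f, hf, fun p hp => (hvalue 0 (p.natDegree + 1)).2 ?_, fun α hα s => ?_⟩
  · rw [hp, iteratedDeriv_eval, iterate_derivative_eq_zero p.natDegree.lt_succ_self]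
    simp
  · obtain ⟨i, hi⟩ := e.surjective ⟨α, hα⟩
    simpa [hi] using (hvalue i s).1
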